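/- Assume every A_k is a real symmetric matrix and every B_k is a real invertible matrix, with C_k = B_{k−1}ᵀ for k = 2,…,n and C_1 = B_nᵀ. Let E be real. If z ∈ ℂ is a nonzero eigenvalue of T(E), then 1/z, z̄, and 1/z̄ are also eigenvalues of T(E). -/

import Mathlib

open Matrix

noncomputable def tstep {m : ℕ} (A B C : Matrix (Fin m) (Fin m) ℂ) (E : ℂ) :
    Matrix (Fin m ⊕ Fin m) (Fin m ⊕ Fin m) ℂ :=
  Matrix.fromBlocks (B⁻¹ * (E • 1 - A)) (-(B⁻¹ * C)) 1 0

/-- The transfer matrix `T(E) = t_n(E) ⋯ t_1(E)` (0-indexed: `t_{n-1} ⋯ t_0`). -/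
noncomputable def transfer {n m : ℕ} (A B C : Fin n → Matrix (Fin m) (Fin m) ℂ) (E : ℂ) :
    Matrix (Fin m ⊕ Fin m) (Fin m ⊕ Fin m) ℂ :=
  ((List.ofFn fun k : Fin n => tstep (A k) (B k) (C k) E).reverse).prod

/-- The transfer matrix (over `ℂ`) of the real symmetric chain, with
`C_k = B_{k-1}ᵀ` cyclically (`C_1 = B_nᵀ`). -/
noncomputable def transferR {n m : ℕ} (hn : 0 < n) (A B : Fin n → Matrix (Fin m) (Fin m) ℝ)
    (E : ℂ) : Matrix (Fin m ⊕ Fin m) (Fin m ⊕ Fin m) ℂ :=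
  transfer (fun k => (A k).map Complex.ofReal) (fun k => (B k).map Complex.ofReal)
    (fun k => (((B ⟨((k : ℕ) + (n - 1)) % n, Nat.mod_lt _ hn⟩)ᵀ).map Complex.ofReal)) E


/-! Each step satisfies `t_kᵀ Ω(B_k) t_k = Ω(C_kᵀ)` for `Ω(B) = [[0, Bᵀ], [-B, 0]]`; since
`C_kᵀ = B_{k-1}` cyclically, these relations telescope to `Tᵀ W T = W` with `W = Ω(B_n)`
invertible. Then `W (T - z⁻¹) = -z⁻¹ (T - z)ᵀ W T`, so `z⁻¹` is an eigenvalue along with `z`.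
For real `E` the entries of `T` are real, so `conj (det (T - z)) = det (T - z̄)`. -/

theorem map_star_nonsing_inv {ι α : Type*} [Fintype ι] [DecidableEq ι] [CommRing α] [StarRing α]
    (A : Matrix ι ι α) : A⁻¹.map star = (A.map star)⁻¹ := by
  rw [← transpose_conjTranspose, transpose_nonsing_inv, conjTranspose_nonsing_inv,
    transpose_conjTranspose]

section Forms

variable {ι R : Type*} [Fintype ι] [DecidableEq ι] [CommRing R]

def sympForm (B : Matrix ι ι R) : Matrix (ι ⊕ ι) (ι ⊕ ι) R :=
  fromBlocks 0 Bᵀ (-B) 0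

theorem isUnit_det_sympForm {B : Matrix ι ι R} (hB : IsUnit B.det) :
    IsUnit (sympForm B).det := by
  have hBT : IsUnit Bᵀ.det := by rwa [det_transpose]
  apply isUnit_det_of_right_inverse (B := fromBlocks 0 (-B⁻¹) (Bᵀ)⁻¹ 0)
  simp [sympForm, fromBlocks_multiply, mul_nonsing_inv _ hB, mul_nonsing_inv _ hBT,
    ← fromBlocks_one]

theorem transpose_ofFn_reverse_prod_mul_mul :
    ∀ {j : ℕ} (t : Fin j → Matrix ι ι R) (O : Fin (j + 1) → Matrix ι ι R),
      (∀ k, (t k)ᵀ * O k.succ * t k = O k.castSucc) →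
      ((List.ofFn t).reverse.prod)ᵀ * O (Fin.last j) * (List.ofFn t).reverse.prod = O 0
  | 0, _, _, _ => by simp
  | j + 1, t, O, h => by
    have ih := transpose_ofFn_reverse_prod_mul_mul (fun k => t k.castSucc) (fun k => O k.castSucc)
      fun k => h k.castSucc
    rw [List.ofFn_succ', List.concat_eq_append, List.reverse_append, List.reverse_singleton,
      List.singleton_append, List.prod_cons, transpose_mul, ← Fin.succ_last]
    rw [← h (Fin.last j), Fin.castSucc_zero] at ih
    simpa only [Matrix.mul_assoc] using ih

end Forms

section Eigenvalues

variable {ι K : Type*} [Fintype ι] [DecidableEq ι] [Field K]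

theorem det_sub_inv_smul_one_eq_zero {T W : Matrix ι ι K} (hTW : Tᵀ * W * T = W)
    (hW : IsUnit W.det) {z : K} (hz : z ≠ 0) (h : (T - z • 1).det = 0) :
    (T - z⁻¹ • 1).det = 0 := by
  have key : W * (T - z⁻¹ • 1) = (-z⁻¹) • ((T - z • 1)ᵀ * (W * T)) := by
    rw [transpose_sub, transpose_smul, transpose_one, sub_mul, ← Matrix.mul_assoc, hTW,
      smul_mul, Matrix.one_mul, Matrix.mul_sub, Matrix.mul_smul, Matrix.mul_one, smul_sub,
      smul_smul, neg_mul, inv_mul_cancel₀ hz]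
    module
  have hdet := congrArg det key
  rw [det_mul, det_smul, det_mul, det_transpose, h, zero_mul, mul_zero] at hdet
  exact hW.mul_right_eq_zero.mp hdet

theorem det_sub_map_smul_one_eq_zero (σ : K →+* K) {T : Matrix ι ι K} (hT : T.map σ = T)
    {z : K} (h : (T - z • 1).det = 0) : (T - σ z • 1).det = 0 := by
  have hmap : σ.mapMatrix (T - z • 1) = T - σ z • 1 := by
    rw [map_sub, RingHom.mapMatrix_apply, hT, RingHom.mapMatrix_apply,
      Matrix.map_smul' _ _ _ (map_mul σ), Matrix.map_one _ (map_zero σ) (map_one σ)]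
  rw [← hmap, ← RingHom.map_det, h, map_zero]

end Eigenvalues

section TransferMatrix

variable {n m : ℕ}

theorem tstep_transpose_mul_sympForm_mul {A B : Matrix (Fin m) (Fin m) ℂ}
    (C : Matrix (Fin m) (Fin m) ℂ) (E : ℂ) (hA : Aᵀ = A) (hB : IsUnit B.det) :
    (tstep A B C E)ᵀ * sympForm B * tstep A B C E = sympForm Cᵀ := by
  have hBT : IsUnit Bᵀ.det := by rwa [det_transpose]
  simp only [tstep, sympForm, fromBlocks_transpose, fromBlocks_multiply, transpose_mul,
    transpose_nonsing_inv, transpose_sub, transpose_smul, transpose_one, transpose_neg, hA,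
    transpose_zero, Matrix.mul_zero, Matrix.zero_mul, Matrix.mul_one, Matrix.one_mul,
    Matrix.mul_neg, Matrix.neg_mul, add_zero, zero_add, neg_neg, transpose_transpose,
    nonsing_inv_mul_cancel_right _ _ hBT, mul_nonsing_inv_cancel_left _ _ hB]
  simp

theorem tstep_map_conj (A B C : Matrix (Fin m) (Fin m) ℂ) (E : ℂ) :
    (tstep A B C E).map (starRingEnd ℂ) =
      tstep (A.map (starRingEnd ℂ)) (B.map (starRingEnd ℂ)) (C.map (starRingEnd ℂ))
        (starRingEnd ℂ E) := by
  have hinv := map_star_nonsing_inv B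
  rw [Complex.star_def] at hinv
  simp [tstep, fromBlocks_map, Matrix.map_mul, hinv, Matrix.map_sub, Matrix.map_smul',
    Matrix.map_neg]

theorem transfer_map_conj (A B C : Fin n → Matrix (Fin m) (Fin m) ℂ) (E : ℂ) :
    (transfer A B C E).map (starRingEnd ℂ) =
      transfer (fun k => (A k).map (starRingEnd ℂ)) (fun k => (B k).map (starRingEnd ℂ))
        (fun k => (C k).map (starRingEnd ℂ)) (starRingEnd ℂ E) := by
  change (starRingEnd ℂ).mapMatrix _ = _
  rw [transfer, map_list_prod, List.map_reverse, List.map_ofFn]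
  simp only [Function.comp_def, RingHom.mapMatrix_apply, tstep_map_conj, transfer]

theorem transferR_map_conj (hn : 0 < n) (A B : Fin n → Matrix (Fin m) (Fin m) ℝ) (E : ℝ) :
    (transferR hn A B E).map (starRingEnd ℂ) = transferR hn A B E := by
  simp only [transferR, transfer_map_conj, Matrix.map_map, Function.comp_def, Complex.conj_ofReal]

theorem exists_transpose_mul_transferR_mul_eq (hn : 0 < n)
    {A B : Fin n → Matrix (Fin m) (Fin m) ℝ} (E : ℂ) (hA : ∀ k, (A k).IsSymm)
    (hB : ∀ k, IsUnit (B k)) :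
    ∃ W, IsUnit W.det ∧ (transferR hn A B E)ᵀ * W * transferR hn A B E = W := by
  have hBdet (k : Fin n) : IsUnit ((B k).map Complex.ofReal).det :=
    (isUnit_iff_isUnit_det _).mp ((hB k).map Complex.ofRealHom.mapMatrix)
  -- `O i` is the form of `B_{i-1}` with indices mod `n`, so that `O n = O 0` closes the cycle.
  let O (i : Fin (n + 1)) :=
    sympForm ((B ⟨(i + (n - 1)) % n, Nat.mod_lt _ hn⟩).map Complex.ofReal)
  have hlast : O (Fin.last n) = O 0 := by
    simp only [O, Fin.val_last, Fin.val_zero, Nat.add_mod_left, zero_add]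
  have hsucc (k : Fin n) : O k.succ = sympForm ((B k).map Complex.ofReal) := by
    have hk : ((k.succ : ℕ) + (n - 1)) % n = k := by
      rw [Fin.val_succ, show (k : ℕ) + 1 + (n - 1) = k + n by omega, Nat.add_mod_right,
        Nat.mod_eq_of_lt k.isLt]
    simp only [O, hk, Fin.eta]
  refine ⟨O 0, isUnit_det_sympForm (hBdet _), ?_⟩
  have hchain := transpose_ofFn_reverse_prod_mul_mul
    (fun k => tstep ((A k).map Complex.ofReal) ((B k).map Complex.ofReal)
      (((B ⟨(k + (n - 1)) % n, Nat.mod_lt _ hn⟩)ᵀ).map Complex.ofReal) E) O fun k => by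
    rw [hsucc, tstep_transpose_mul_sympForm_mul _ _ ((hA k).map _) (hBdet k), transpose_map,
      transpose_transpose]
    rfl
  rwa [hlast] at hchain

end TransferMatrix

/-- For the real symmetric chain and real `E`: if `z` is a nonzero eigenvalue of
`T(E)`, then so are `1/z`, `z̄` and `1/z̄`. -/
theorem stmt19 {n m : ℕ} (hn : 2 ≤ n)
    (A B : Fin n → Matrix (Fin m) (Fin m) ℝ)
    (hA : ∀ k, (A k).IsSymm) (hB : ∀ k, IsUnit (B k)) (E : ℝ) (z : ℂ) (hz : z ≠ 0)
    (hev : (transferR (by omega) A B (E : ℂ) - z • 1).det = 0) :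
    (transferR (by omega : 0 < n) A B (E : ℂ) - z⁻¹ • 1).det = 0 ∧
    (transferR (by omega : 0 < n) A B (E : ℂ) - (starRingEnd ℂ z) • 1).det = 0 ∧
    (transferR (by omega : 0 < n) A B (E : ℂ) - ((starRingEnd ℂ z)⁻¹) • 1).det = 0 := by
  obtain ⟨W, hW, hTW⟩ := exists_transpose_mul_transferR_mul_eq (by omega) E hA hB
  have hconj := det_sub_map_smul_one_eq_zero (starRingEnd ℂ) (transferR_map_conj _ A B E) hev
  exact ⟨det_sub_inv_smul_one_eq_zero hTW hW hz hev, hconj,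
    det_sub_inv_smul_one_eq_zero hTW hW ((map_ne_zero _).mpr hz) hconj⟩
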